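/- arXiv:1912.11863 — 2 statements merged into one kernel-verified Lean document; each statement's English description precedes it below -/
import Mathlib

section
/- Assume F has bounded variation along x̄ uniformly over A, with δ̄ > 0 such that η^{δ̄}(T) < +∞, and assume hypotheses (C1) and (C2). Take δ ∈ (0, δ̄). Then for every s̄ ∈ [S,T), the right limit F(s̄⁺,x,a) := lim_{s↓s̄} F(s,x,a) exists (in the sense of Hausdorff distance, equivalently the Kuratowski lim sup and lim inf coincide) for every x ∈ x̄(s̄) + δB and a ∈ A; and for every t̄ ∈ (S,T], the left limit F(t̄⁻,y,a) := lim_{t↑t̄} F(t,y,a) exists for every y ∈ x̄(t̄) + δB and a ∈ A. -/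
open Set Metric Filter MeasureTheory
open scoped ENNReal Topology Classical

noncomputable section

/-- Euclidean space `ℝ^n`. -/
abbrev Eucl (n : ℕ) : Type := EuclideanSpace ℝ (Fin n)

/-- A (strict) partition `a = τ 0 < τ 1 < ⋯ < τ N = b` of the interval `[a,b]`. -/
def IsPartition (a b : ℝ) (N : ℕ) (τ : ℕ → ℝ) : Prop :=
  0 < N ∧ τ 0 = a ∧ τ N = b ∧ ∀ i < N, τ i < τ (i + 1)

/-- The mesh (diameter) of the partition `τ` is at most `ε`. -/
def MeshLE (N : ℕ) (τ : ℕ → ℝ) (ε : ℝ) : Prop :=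
  ∀ i < N, τ (i + 1) - τ i ≤ ε

/-- The tube `x̄([s,t]) + δ B` around the arc `x̄` on `[s,t]`. -/
def tube {n : ℕ} (xbar : ℝ → Eucl n) (s t δ : ℝ) : Set (Eucl n) :=
  {y | ∃ r ∈ Icc s t, dist y (xbar r) ≤ δ}

/-- `I^δ(𝒯) = Σᵢ sup { d_H (F(t_{i+1},x,a), F(t_i,x,a)) : x ∈ x̄([t_i,t_{i+1}]) + δB, a ∈ A }`. -/
def variSum {n k : ℕ} (F : ℝ → Eucl n → Eucl k → Set (Eucl n)) (xbar : ℝ → Eucl n)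
    (A : Set (Eucl k)) (δ : ℝ) (N : ℕ) (τ : ℕ → ℝ) : ℝ≥0∞ :=
  ∑ i ∈ Finset.range N,
    ⨆ x ∈ tube xbar (τ i) (τ (i + 1)) δ, ⨆ a ∈ A,
      EMetric.hausdorffEdist (F (τ (i + 1)) x a) (F (τ i) x a)

/-- `η^δ_ε(t)`: the `(δ,ε)`-perturbed cumulative variation of `F` along `x̄`, uniformly
over `A`, on the base interval `[S,t]`.  (For `t = S` there are no partitions and the
supremum is `0`.) -/
def etaE {n k : ℕ} (F : ℝ → Eucl n → Eucl k → Set (Eucl n)) (xbar : ℝ → Eucl n)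
    (A : Set (Eucl k)) (S δ ε t : ℝ) : ℝ≥0∞ :=
  ⨆ (N : ℕ) (τ : ℕ → ℝ) (_ : IsPartition S t N τ) (_ : MeshLE N τ ε),
    variSum F xbar A δ N τ

/-- `η^δ(t) = lim_{ε ↓ 0} η^δ_ε(t)` (the limit of a monotone family: the infimum). -/
def etaD {n k : ℕ} (F : ℝ → Eucl n → Eucl k → Set (Eucl n)) (xbar : ℝ → Eucl n)
    (A : Set (Eucl k)) (S δ t : ℝ) : ℝ≥0∞ :=
  ⨅ (ε : ℝ) (_ : 0 < ε), etaE F xbar A S δ ε t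

/-- `η(t) = lim_{δ ↓ 0} η^δ(t)`: the cumulative variation function of `F` along `x̄`,
uniformly over `A`. -/
def eta {n k : ℕ} (F : ℝ → Eucl n → Eucl k → Set (Eucl n)) (xbar : ℝ → Eucl n)
    (A : Set (Eucl k)) (S t : ℝ) : ℝ≥0∞ :=
  ⨅ (δ : ℝ) (_ : 0 < δ), etaD F xbar A S δ t

/-- Hypothesis (C1): nonempty closed values, measurability in `t`, and uniform
boundedness `F(t,x,a) ⊆ cB` near the arc. -/
def HypC1 {n k : ℕ} (F : ℝ → Eucl n → Eucl k → Set (Eucl n)) (xbar : ℝ → Eucl n)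
    (A : Set (Eucl k)) (S T δbar : ℝ) : Prop :=
  (∀ t x a, (F t x a).Nonempty ∧ IsClosed (F t x a)) ∧
  (∀ (x : Eucl n) (a : Eucl k), ∀ U : Set (Eucl n), IsOpen U →
     MeasurableSet {t | t ∈ Icc S T ∧ (F t x a ∩ U).Nonempty}) ∧
  (∃ c > (0 : ℝ), ∀ t ∈ Icc S T, ∀ a ∈ A, ∀ x : Eucl n, dist x (xbar t) ≤ δbar →
     F t x a ⊆ closedBall 0 c)

/-- Hypothesis (C2): `F(t,x,a) ⊆ F(t,x',a') + γ(|x-x'| + |a-a'|)B` near the arc, where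
`γ` is a modulus of continuity. -/
def HypC2 {n k : ℕ} (F : ℝ → Eucl n → Eucl k → Set (Eucl n)) (xbar : ℝ → Eucl n)
    (A : Set (Eucl k)) (S T δbar : ℝ) (γ : ℝ → ℝ) : Prop :=
  ContinuousOn γ (Ici 0) ∧ MonotoneOn γ (Ici 0) ∧ γ 0 = 0 ∧ (∀ r ≥ (0 : ℝ), 0 ≤ γ r) ∧
  ∀ t ∈ Icc S T, ∀ x x' : Eucl n, ∀ a ∈ A, ∀ a' ∈ A,
    dist x (xbar t) ≤ δbar → dist x' (xbar t) ≤ δbar →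
    ∀ y ∈ F t x a, ∃ z ∈ F t x' a', dist y z ≤ γ (dist x x' + dist a a')

end

/-!
If `x` stays `δ̄`-close to the arc on `[u, v]`, every fine partition of `[S, u]` followed by a
fine partition of `[u, v]` is admissible for `η^δ̄(v)`, and the chained triangle inequality
bounds `d_H(F(u,x,a), F(v,x,a))` by the second part of its variation sum. Hence
`η^δ̄(u) + d_H(F(u,x,a), F(v,x,a)) ≤ η^δ̄(v)`. The function `η^δ̄` is nondecreasing and finite
up to `T`, so it has one-sided limits, which makes `s ↦ F(s,x,a)` Cauchy for the Hausdorff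
distance from either side. Closures do not change Hausdorff distances, and the closed subsets
of `ℝⁿ` form a complete space for that distance.
-/

theorem hausdorffEDist_le_sum_Ico {X : Type*} [EMetricSpace X] (s : ℕ → Set X) {i j : ℕ}
    (hij : i ≤ j) :
    hausdorffEDist (s i) (s j) ≤ ∑ l ∈ Finset.Ico i j, hausdorffEDist (s l) (s (l + 1)) := by
  let c : ℕ → TopologicalSpace.Closeds X := fun l => ⟨closure (s l), isClosed_closure⟩
  simpa [c, TopologicalSpace.Closeds.edist_eq] using edist_le_Ico_sum_edist c hij

theorem exists_tendsto_hausdorffEDist_of_le_edist {α X Y : Type*} [EMetricSpace X]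
    [CompleteSpace X] [PseudoEMetricSpace Y] {l : Filter α} [l.NeBot] {s : α → Set X}
    {φ : α → Y} {c : Y} (hφ : Tendsto φ l (𝓝 c))
    (hs : ∀ᶠ p in l ×ˢ l, hausdorffEDist (s p.1) (s p.2) ≤ edist (φ p.1) (φ p.2)) :
    ∃ K : Set X, Tendsto (fun a => hausdorffEDist (s a) K) l (𝓝 0) := by
  let g : α → TopologicalSpace.Closeds X := fun a => ⟨closure (s a), isClosed_closure⟩
  have hg : ∀ a b, edist (g a) (g b) = hausdorffEDist (s a) (s b) := fun a b => by
    simp [g, TopologicalSpace.Closeds.edist_eq]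
  have hφφ : Tendsto (fun p : α × α => edist (φ p.1) (φ p.2)) (l ×ˢ l) (𝓝 0) := by
    simpa using ((hφ.comp tendsto_fst).edist (hφ.comp tendsto_snd))
  have hgg : Tendsto (fun p : α × α => edist (g p.1) (g p.2)) (l ×ˢ l) (𝓝 0) := by
    simp only [hg]
    exact tendsto_of_tendsto_of_tendsto_of_le_of_le' tendsto_const_nhds hφφ
      (Eventually.of_forall fun _ => bot_le) hs
  have hcauchy : Cauchy (l.map g) := by
    refine cauchy_map_iff'.2 (uniformity_basis_edist.tendsto_right_iff.2 fun ε hε => ?_)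
    exact (tendsto_order.1 hgg).2 ε hε
  obtain ⟨K, hK⟩ := CompleteSpace.complete hcauchy
  refine ⟨K, ?_⟩
  have := tendsto_iff_edist_tendsto_0.1 hK
  simpa [g, TopologicalSpace.Closeds.edist_eq, hausdorffEDist_closure_left] using this

theorem le_edist_toReal_of_add_le {a b d : ℝ≥0∞} (hb : b ≠ ⊤) (h : a + d ≤ b) :
    d ≤ edist a.toReal b.toReal := by
  have ha : a ≠ ⊤ := ne_top_of_le_ne_top hb (le_self_add.trans h)
  calc d ≤ b - a := ENNReal.le_sub_of_add_le_left ha h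
    _ = ENNReal.ofReal (b.toReal - a.toReal) := by
      rw [ENNReal.ofReal_sub _ ENNReal.toReal_nonneg, ENNReal.ofReal_toReal ha,
        ENNReal.ofReal_toReal hb]
    _ ≤ edist a.toReal b.toReal := by
      rw [edist_dist, Real.dist_eq, abs_sub_comm]
      exact ENNReal.ofReal_le_ofReal (le_abs_self _)

theorem exists_isPartition_meshLE {a b ε : ℝ} (hab : a < b) (hε : 0 < ε) :
    ∃ N τ, IsPartition a b N τ ∧ MeshLE N τ ε := by
  set N : ℕ := ⌈(b - a) / ε⌉₊
  have hN : 0 < N := Nat.ceil_pos.2 (div_pos (sub_pos.2 hab) hε)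
  have hN' : (0 : ℝ) < N := Nat.cast_pos.2 hN
  have hstep : (b - a) / N ≤ ε := by
    rw [div_le_iff₀ hN', ← div_le_iff₀' hε]
    exact Nat.le_ceil _
  refine ⟨N, fun i => a + i * ((b - a) / N), ⟨hN, by simp, by field_simp; ring, fun i _ => ?_⟩,
    fun i _ => ?_⟩
  · push_cast
    nlinarith [div_pos (sub_pos.2 hab) hN']
  · push_cast
    linarith

theorem IsPartition.mem_Icc {a b : ℝ} {N : ℕ} {τ : ℕ → ℝ} (hτ : IsPartition a b N τ) {i : ℕ}
    (hi : i ≤ N) : τ i ∈ Icc a b := by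
  obtain ⟨-, rfl, rfl, hlt⟩ := hτ
  have hmono : MonotoneOn τ (Iic N) :=
    (strictMonoOn_Iic_of_lt_succ fun m hm => by simpa using hlt m hm).monotoneOn
  exact ⟨hmono (Nat.zero_le N) hi (Nat.zero_le i), hmono hi (le_refl N) hi⟩

theorem IsPartition.lt {a b : ℝ} {N : ℕ} {τ : ℕ → ℝ} (hτ : IsPartition a b N τ) : a < b :=
  hτ.2.1 ▸ (hτ.2.2.2 0 hτ.1).trans_le (hτ.mem_Icc hτ.1).2

def appendPartition (N : ℕ) (τ σ : ℕ → ℝ) : ℕ → ℝ :=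
  fun i => if i ≤ N then τ i else σ (i - N)

section Append

variable {a b c : ℝ} {N M : ℕ} {τ σ : ℕ → ℝ}

theorem appendPartition_of_le {i : ℕ} (hi : i ≤ N) : appendPartition N τ σ i = τ i :=
  if_pos hi

theorem appendPartition_add (hτσ : τ N = σ 0) (i : ℕ) :
    appendPartition N τ σ (N + i) = σ i := by
  rcases i.eq_zero_or_pos with rfl | hi
  · simp [appendPartition, hτσ]
  · simp [appendPartition, hi.ne']

theorem appendPartition_step (hτσ : τ N = σ 0) (P : ℝ → ℝ → Prop)
    (hτ : ∀ i < N, P (τ i) (τ (i + 1))) (hσ : ∀ j < M, P (σ j) (σ (j + 1))) :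
    ∀ i < N + M, P (appendPartition N τ σ i) (appendPartition N τ σ (i + 1)) := by
  intro i hi
  rcases lt_or_ge i N with hiN | hiN
  · rw [appendPartition_of_le hiN.le, appendPartition_of_le hiN]
    exact hτ i hiN
  · obtain ⟨j, rfl⟩ := Nat.exists_eq_add_of_le hiN
    rw [appendPartition_add hτσ, add_assoc, appendPartition_add hτσ]
    exact hσ j (by omega)

theorem IsPartition.append (hτ : IsPartition a b N τ) (hσ : IsPartition b c M σ) :
    IsPartition a c (N + M) (appendPartition N τ σ) := by
  obtain ⟨hN, hτa, hτb, hτ⟩ := hτ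
  obtain ⟨hM, hσb, hσc, hσ⟩ := hσ
  have hτσ : τ N = σ 0 := hτb.trans hσb.symm
  exact ⟨by omega, by rw [appendPartition_of_le (Nat.zero_le N), hτa],
    by rw [appendPartition_add hτσ, hσc], appendPartition_step hτσ _ hτ hσ⟩

theorem MeshLE.append {ε : ℝ} (hτσ : τ N = σ 0) (hτ : MeshLE N τ ε) (hσ : MeshLE M σ ε) :
    MeshLE (N + M) (appendPartition N τ σ) ε :=
  appendPartition_step hτσ (fun s t => t - s ≤ ε) hτ hσ

theorem variSum_append {n k : ℕ} (F : ℝ → Eucl n → Eucl k → Set (Eucl n)) (xbar : ℝ → Eucl n)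
    (A : Set (Eucl k)) (δ : ℝ) (hτσ : τ N = σ 0) :
    variSum F xbar A δ (N + M) (appendPartition N τ σ) =
      variSum F xbar A δ N τ + variSum F xbar A δ M σ := by
  unfold variSum
  rw [Finset.sum_range_add]
  congr 1
  · refine Finset.sum_congr rfl fun i hi => ?_
    have hi : i < N := Finset.mem_range.1 hi
    rw [appendPartition_of_le hi.le, appendPartition_of_le hi]
  · refine Finset.sum_congr rfl fun i _ => ?_
    rw [add_assoc, appendPartition_add hτσ, appendPartition_add hτσ]

end Append

section Variation

variable {n k : ℕ} {F : ℝ → Eucl n → Eucl k → Set (Eucl n)} {xbar : ℝ → Eucl n}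
  {A : Set (Eucl k)} {S δ ε : ℝ} {x : Eucl n} {a : Eucl k}

theorem hausdorffEDist_le_variSum {u v : ℝ} {M : ℕ} {σ : ℕ → ℝ} (hσ : IsPartition u v M σ)
    (hx : ∀ r ∈ Icc u v, dist x (xbar r) ≤ δ) (ha : a ∈ A) :
    hausdorffEDist (F u x a) (F v x a) ≤ variSum F xbar A δ M σ := by
  calc hausdorffEDist (F u x a) (F v x a)
      ≤ ∑ l ∈ Finset.range M, hausdorffEDist (F (σ l) x a) (F (σ (l + 1)) x a) := by
        have h := hausdorffEDist_le_sum_Ico (fun l => F (σ l) x a) (Nat.zero_le M)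
        rwa [← Finset.range_eq_Ico, hσ.2.1, hσ.2.2.1] at h
    _ ≤ variSum F xbar A δ M σ := by
        refine Finset.sum_le_sum fun l hl => ?_
        have hl : l < M := Finset.mem_range.1 hl
        have hxl : x ∈ tube xbar (σ l) (σ (l + 1)) δ :=
          ⟨σ l, ⟨le_rfl, (hσ.2.2.2 l hl).le⟩, hx _ (hσ.mem_Icc hl.le)⟩
        rw [hausdorffEDist_comm]
        exact le_iSup₂_of_le x hxl (le_iSup₂_of_le a ha le_rfl)

theorem variSum_le_etaE {t : ℝ} {N : ℕ} {τ : ℕ → ℝ} (hτ : IsPartition S t N τ)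
    (hτε : MeshLE N τ ε) : variSum F xbar A δ N τ ≤ etaE F xbar A S δ ε t :=
  le_iSup₂_of_le N τ (le_iSup₂_of_le hτ hτε le_rfl)

theorem etaE_add_variSum_le {u v : ℝ} (hSu : S < u) (hε : 0 < ε) {M : ℕ} {σ : ℕ → ℝ}
    (hσ : IsPartition u v M σ) (hσε : MeshLE M σ ε) :
    etaE F xbar A S δ ε u + variSum F xbar A δ M σ ≤ etaE F xbar A S δ ε v := by
  have hcat : ∀ N τ, IsPartition S u N τ → MeshLE N τ ε →
      variSum F xbar A δ N τ + variSum F xbar A δ M σ ≤ etaE F xbar A S δ ε v := by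
    intro N τ hτ hτε
    have hτσ : τ N = σ 0 := hτ.2.2.1.trans hσ.2.1.symm
    rw [← variSum_append F xbar A δ hτσ]
    exact variSum_le_etaE (hτ.append hσ) (hτε.append hτσ hσε)
  obtain ⟨N, τ, hτ, hτε⟩ := exists_isPartition_meshLE hSu hε
  have hσv : variSum F xbar A δ M σ ≤ etaE F xbar A S δ ε v := le_add_self.trans (hcat N τ hτ hτε)
  rcases eq_or_ne (variSum F xbar A δ M σ) ⊤ with htop | htop
  · have hv : etaE F xbar A S δ ε v = ⊤ := top_le_iff.1 (htop ▸ hσv)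
    exact hv ▸ le_top
  calc etaE F xbar A S δ ε u + variSum F xbar A δ M σ
      ≤ (etaE F xbar A S δ ε v - variSum F xbar A δ M σ) + variSum F xbar A δ M σ := by
        gcongr
        exact iSup₂_le fun N τ => iSup₂_le fun hτ hτε =>
          ENNReal.le_sub_of_add_le_right htop (hcat N τ hτ hτε)
    _ = etaE F xbar A S δ ε v := tsub_add_cancel_of_le hσv

theorem etaE_eq_zero_of_le {t : ℝ} (ht : t ≤ S) : etaE F xbar A S δ ε t = 0 :=
  le_antisymm (iSup₂_le fun _ _ => iSup₂_le fun hτ _ => absurd hτ.lt ht.not_gt) bot_le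

theorem monotone_etaE (hε : 0 < ε) : Monotone (etaE F xbar A S δ ε) := by
  intro u v huv
  rcases le_or_gt u S with huS | hSu
  · rw [etaE_eq_zero_of_le huS]
    exact bot_le
  rcases huv.eq_or_lt with rfl | huv
  · exact le_rfl
  obtain ⟨M, σ, hσ, hσε⟩ := exists_isPartition_meshLE huv hε
  exact le_self_add.trans (etaE_add_variSum_le hSu hε hσ hσε)

theorem monotone_etaD : Monotone (etaD F xbar A S δ) := fun _ _ huv =>
  le_iInf₂ fun ε hε => (iInf₂_le ε hε).trans (monotone_etaE hε huv)

theorem etaD_add_hausdorffEDist_le {u v : ℝ} (hSu : S < u) (huv : u ≤ v)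
    (hx : ∀ r ∈ Icc u v, dist x (xbar r) ≤ δ) (ha : a ∈ A) :
    etaD F xbar A S δ u + hausdorffEDist (F u x a) (F v x a) ≤ etaD F xbar A S δ v := by
  rcases huv.eq_or_lt with rfl | huv
  · simp
  refine le_iInf₂ fun ε hε => ?_
  obtain ⟨M, σ, hσ, hσε⟩ := exists_isPartition_meshLE huv hε
  calc etaD F xbar A S δ u + hausdorffEDist (F u x a) (F v x a)
      ≤ etaE F xbar A S δ ε u + variSum F xbar A δ M σ :=
        add_le_add (iInf₂_le ε hε) (hausdorffEDist_le_variSum hσ hx ha)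
    _ ≤ etaE F xbar A S δ ε v := etaE_add_variSum_le hSu hε hσ hσε

theorem exists_tendsto_hausdorffEDist_of_eventually {T : ℝ} {l : Filter ℝ} [l.NeBot]
    [TendstoIxxClass Icc l l] (hgood : ∀ᶠ r in l, r ∈ Ioc S T ∧ dist x (xbar r) ≤ δ)
    (hT : etaD F xbar A S δ T ≠ ⊤) (ha : a ∈ A) {c : ℝ≥0∞}
    (hc : Tendsto (etaD F xbar A S δ) l (𝓝 c)) :
    ∃ K : Set (Eucl n), Tendsto (fun s => hausdorffEDist (F s x a) K) l (𝓝 0) := by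
  have hfin : ∀ t ≤ T, etaD F xbar A S δ t ≠ ⊤ := fun t ht =>
    ne_top_of_le_ne_top hT (monotone_etaD ht)
  have hc_top : c ≠ ⊤ := ne_top_of_le_ne_top hT <|
    le_of_tendsto hc (hgood.mono fun t ht => monotone_etaD ht.1.2)
  have hIcc : ∀ᶠ p in l ×ˢ l, Icc p.1 p.2 ⊆ {r | r ∈ Ioc S T ∧ dist x (xbar r) ≤ δ} :=
    (tendsto_fst.Icc tendsto_snd).eventually (eventually_smallSets_subset.2 hgood)
  refine exists_tendsto_hausdorffEDist_of_le_edist ((ENNReal.tendsto_toReal hc_top).comp hc) ?_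
  filter_upwards [hIcc, (tendsto_snd.Icc tendsto_fst).eventually
    (eventually_smallSets_subset.2 hgood)] with ⟨u, v⟩ huv hvu
  wlog h : u ≤ v generalizing u v
  · rw [hausdorffEDist_comm, edist_comm]
    exact this v u hvu huv (le_of_not_ge h)
  have hu := huv (left_mem_Icc.2 h)
  have hv := huv (right_mem_Icc.2 h)
  exact le_edist_toReal_of_add_le (hfin v hv.1.2) <|
    etaD_add_hausdorffEDist_le hu.1.1 h (fun r hr => (huv hr).2) ha

end Variation

theorem stmt3_general {n k : ℕ} (S T : ℝ)
    (A : Set (Eucl k))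
    (F : ℝ → Eucl n → Eucl k → Set (Eucl n))
    (xbar : ℝ → Eucl n) (hx : ContinuousOn xbar (Icc S T))
    (δbar : ℝ) (hfin : etaD F xbar A S δbar T < ⊤)
    (δ : ℝ) (hδδ : δ < δbar) :
    (∀ sbar ∈ Ico S T, ∀ x : Eucl n, dist x (xbar sbar) ≤ δ → ∀ a ∈ A,
      ∃ G : Set (Eucl n),
        Tendsto (fun s => EMetric.hausdorffEdist (F s x a) G)
          (𝓝[Ioc sbar T] sbar) (𝓝 0)) ∧
    (∀ tbar ∈ Ioc S T, ∀ y : Eucl n, dist y (xbar tbar) ≤ δ → ∀ a ∈ A,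
      ∃ G : Set (Eucl n),
        Tendsto (fun t => EMetric.hausdorffEdist (F t y a) G)
          (𝓝[Ico S tbar] tbar) (𝓝 0)) := by
  have hnear : ∀ t ∈ Icc S T, ∀ x : Eucl n, dist x (xbar t) ≤ δ → ∀ s ⊆ Icc S T,
      ∀ᶠ r in 𝓝[s] t, dist x (xbar r) ≤ δbar := fun t ht x hxt s hs =>
    (tendsto_const_nhds.dist ((hx t ht).mono hs).tendsto).eventually_le_const (hxt.trans_lt hδδ)
  refine ⟨fun sbar hsbar x hxs a ha => ?_, fun tbar htbar y hyt a ha => ?_⟩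
  · have hgood := hnear sbar (Ico_subset_Icc_self hsbar) x hxs (Ioc sbar T)
      (Ioc_subset_Icc_self.trans (Icc_subset_Icc_left hsbar.1))
    rw [nhdsWithin_Ioc_eq_nhdsGT hsbar.2] at hgood ⊢
    refine exists_tendsto_hausdorffEDist_of_eventually ?_ hfin.ne ha
      (monotone_etaD.tendsto_nhdsGT sbar)
    filter_upwards [Ioc_mem_nhdsGT hsbar.2, hgood] with r hr hrd
    exact ⟨Ioc_subset_Ioc_left hsbar.1 hr, hrd⟩
  · have hgood := hnear tbar (Ioc_subset_Icc_self htbar) y hyt (Ico S tbar)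
      (Ico_subset_Icc_self.trans (Icc_subset_Icc_right htbar.2))
    rw [nhdsWithin_Ico_eq_nhdsLT htbar.1] at hgood ⊢
    refine exists_tendsto_hausdorffEDist_of_eventually ?_ hfin.ne ha
      (monotone_etaD.tendsto_nhdsLT tbar)
    filter_upwards [Ioo_mem_nhdsLT htbar.1, hgood] with r hr hrd
    exact ⟨⟨hr.1, hr.2.le.trans htbar.2⟩, hrd⟩

/-- Under (C1), (C2) and bounded variation of `F` along `x̄` uniformly
over `A` (with `η^δ̄(T) < ∞`), the one-sided Hausdorff limits `F(s̄⁺,x,a)` and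
`F(t̄⁻,y,a)` exist for all `x ∈ x̄(s̄) + δB`, `y ∈ x̄(t̄) + δB` and `a ∈ A`, for every
`δ ∈ (0,δ̄)`. -/
theorem stmt3 {n k : ℕ} (S T : ℝ) (hST : S < T)
    (A : Set (Eucl k)) (hA : IsCompact A)
    (F : ℝ → Eucl n → Eucl k → Set (Eucl n))
    (xbar : ℝ → Eucl n) (hx : ContinuousOn xbar (Icc S T))
    (hBV : eta F xbar A S T < ⊤)
    (δbar : ℝ) (hδbar : 0 < δbar) (hfin : etaD F xbar A S δbar T < ⊤)
    (hC1 : HypC1 F xbar A S T δbar)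
    (γ : ℝ → ℝ) (hC2 : HypC2 F xbar A S T δbar γ)
    (δ : ℝ) (hδ : 0 < δ) (hδδ : δ < δbar) :
    (∀ sbar ∈ Ico S T, ∀ x : Eucl n, dist x (xbar sbar) ≤ δ → ∀ a ∈ A,
      ∃ G : Set (Eucl n),
        Tendsto (fun s => EMetric.hausdorffEdist (F s x a) G)
          (𝓝[Ioc sbar T] sbar) (𝓝 0)) ∧
    (∀ tbar ∈ Ioc S T, ∀ y : Eucl n, dist y (xbar tbar) ≤ δ → ∀ a ∈ A,
      ∃ G : Set (Eucl n),
        Tendsto (fun t => EMetric.hausdorffEdist (F t y a) G)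
          (𝓝[Ico S tbar] tbar) (𝓝 0)) :=
  stmt3_general S T A F xbar hx δbar hfin δ hδδ
end

section
/- Assume F has bounded variation along x̄ uniformly over A, with δ̄ > 0 such that η^{δ̄}(T) < +∞, and assume hypotheses (C1) and (C2). Take δ ∈ (0, δ̄). Then the convergence to the one-sided limits is uniform: for every s̄ ∈ [S,T), lim_{s↓s̄} sup{ d_H(F(s̄⁺,x,a), F(s,x,a)) : x ∈ x̄(s̄) + δB, a ∈ A } = 0, and for every t̄ ∈ (S,T], lim_{t↑t̄} sup{ d_H(F(t̄⁻,x,a), F(t,x,a)) : x ∈ x̄(t̄) + δB, a ∈ A } = 0, where F(s̄⁺, ·, ·) and F(t̄⁻, ·, ·) denote the one-sided Hausdorff limits of F(s, ·, ·) as s ↓ s̄ and s ↑ t̄ respectively. -/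
open Set Metric Filter MeasureTheory
open scoped ENNReal Topology Classical

section Snoc

variable {N : ℕ} {τ : ℕ → ℝ} {b : ℝ}

theorem update_succ_apply_of_le {i : ℕ} (hi : i ≤ N) : Function.update τ (N + 1) b i = τ i :=
  Function.update_of_ne (by omega) _ _

theorem IsPartition.update_succ {S a : ℝ} (hP : IsPartition S a N τ) (hab : a < b) :
    IsPartition S b (N + 1) (Function.update τ (N + 1) b) := by
  obtain ⟨-, hτ0, hτN, hτ⟩ := hP
  refine ⟨N.succ_pos, by rw [update_succ_apply_of_le N.zero_le, hτ0], Function.update_self _ _ _,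
    fun i hi => ?_⟩
  rcases Nat.lt_succ_iff_lt_or_eq.mp hi with hi | rfl
  · rw [update_succ_apply_of_le hi.le, update_succ_apply_of_le hi]; exact hτ i hi
  · rw [update_succ_apply_of_le le_rfl, Function.update_self, hτN]; exact hab

theorem MeshLE.update_succ {ε : ℝ} (hM : MeshLE N τ ε) (hb : b - τ N ≤ ε) :
    MeshLE (N + 1) (Function.update τ (N + 1) b) ε := by
  intro i hi
  rcases Nat.lt_succ_iff_lt_or_eq.mp hi with hi | rfl
  · rw [update_succ_apply_of_le hi.le, update_succ_apply_of_le hi]; exact hM i hi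
  · rw [update_succ_apply_of_le le_rfl, Function.update_self]; exact hb

end Snoc

section Variation

variable {n k : ℕ} (F : ℝ → Eucl n → Eucl k → Set (Eucl n)) (xbar : ℝ → Eucl n)
  (A : Set (Eucl k))

noncomputable def variStep (δ a b : ℝ) : ℝ≥0∞ :=
  ⨆ x ∈ tube xbar a b δ, ⨆ α ∈ A, hausdorffEDist (F b x α) (F a x α)

variable {F xbar A}

theorem hausdorffEDist_le_variStep {δ a b : ℝ} {x : Eucl n} {α : Eucl k}
    (hx : x ∈ tube xbar a b δ) (hα : α ∈ A) :
    hausdorffEDist (F b x α) (F a x α) ≤ variStep F xbar A δ a b :=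
  le_iSup₂_of_le x hx (le_iSup₂ (f := fun α _ => hausdorffEDist (F b x α) (F a x α)) α hα)

theorem variSum_update_succ (δ b : ℝ) (N : ℕ) (τ : ℕ → ℝ) :
    variSum F xbar A δ (N + 1) (Function.update τ (N + 1) b) =
      variSum F xbar A δ N τ + variStep F xbar A δ (τ N) b := by
  rw [variSum, Finset.sum_range_succ, update_succ_apply_of_le le_rfl, Function.update_self]
  congr 1
  exact Finset.sum_congr rfl fun i hi => by
    rw [update_succ_apply_of_le (Finset.mem_range.mp hi).le,
      update_succ_apply_of_le (Finset.mem_range.mp hi)]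

theorem etaE_add_variStep_le {S δ ε a b : ℝ} (hSa : S < a) (hab : a < b) (hba : b - a ≤ ε) :
    etaE F xbar A S δ ε a + variStep F xbar A δ a b ≤ etaE F xbar A S δ ε b := by
  have extend : ∀ N τ, IsPartition S a N τ → MeshLE N τ ε →
      variSum F xbar A δ N τ + variStep F xbar A δ a b ≤ etaE F xbar A S δ ε b := by
    intro N τ hP hM
    have hτN : τ N = a := hP.2.2.1
    rw [← hτN, ← variSum_update_succ]
    exact le_iSup₂_of_le (N + 1) _ (le_iSup₂_of_le (hP.update_succ hab)
      (hM.update_succ (hτN ▸ hba)) le_rfl)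
  obtain ⟨N₀, τ₀, hP₀, hM₀⟩ := exists_isPartition_meshLE hSa (by linarith)
  -- `etaE a` is a supremum over a nonempty family, so `+ variStep a b` distributes over it
  have hsup := ENNReal.biSup_add' (a := variStep F xbar A δ a b)
    (p := fun q : ℕ × (ℕ → ℝ) => IsPartition S a q.1 q.2 ∧ MeshLE q.1 q.2 ε)
    ⟨(N₀, τ₀), hP₀, hM₀⟩ (fun q => variSum F xbar A δ q.1 q.2)
  simp only [iSup_prod, iSup_and] at hsup
  rw [etaE, hsup]
  exact iSup₂_le fun N τ => iSup₂_le fun hP hM => extend N τ hP hM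

theorem etaE_monotoneOn {S δ ε : ℝ} (hε : 0 < ε) :
    MonotoneOn (etaE F xbar A S δ ε) (Ioi S) := by
  intro a ha b _ hab
  have step : ∀ m : ℕ, ∀ b, a ≤ b → b ≤ a + m * ε →
      etaE F xbar A S δ ε a ≤ etaE F xbar A S δ ε b := by
    intro m
    induction m with
    | zero => intro b h₁ h₂; rw [le_antisymm (by simpa using h₂) h₁]
    | succ m ih =>
      intro b h₁ h₂
      set c := max a (b - ε)
      have hc : etaE F xbar A S δ ε a ≤ etaE F xbar A S δ ε c :=
        ih c (le_max_left _ _) (max_le (le_add_of_nonneg_right (by positivity))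
          (by push_cast at h₂; linarith))
      refine hc.trans ?_
      have hcb : c ≤ b := max_le h₁ (by linarith)
      rcases hcb.eq_or_lt with hcb | hcb
      · rw [hcb]
      · exact le_self_add.trans (etaE_add_variStep_le (ha.trans_le (le_max_left _ _)) hcb
          (by linarith [le_max_right a (b - ε)]))
  obtain ⟨m, hm⟩ := exists_nat_ge ((b - a) / ε)
  exact step m b hab (by rw [div_le_iff₀ hε] at hm; linarith)

theorem eventually_variStep_lt_nhdsGT {S T δ ε c : ℝ} {r : ℝ≥0∞} (hε : 0 < ε)
    (hT : etaE F xbar A S δ ε T ≠ ⊤) (hc : c ∈ Ico S T) (hr : 0 < r) :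
    ∀ᶠ b in 𝓝[>] c, ∀ a ∈ Ioo c b, variStep F xbar A δ a b < r := by
  set V := etaE F xbar A S δ ε
  have hmono : MonotoneOn V (Ioi S) := etaE_monotoneOn hε
  have hVT : ∀ t ∈ Ioc c T, V t ≠ ⊤ := fun t ht =>
    ne_top_of_le_ne_top hT (hmono (hc.1.trans_lt ht.1) (hc.1.trans_lt hc.2) ht.2)
  -- the right limit of the monotone `V` at `c`
  set L := ⨅ t : Ioc c T, V t
  have hL : L ≠ ⊤ :=
    ne_top_of_le_ne_top hT (iInf_le (fun t : Ioc c T => V t) ⟨T, hc.2, le_rfl⟩)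
  obtain ⟨⟨t₀, ht₀⟩, hV₀⟩ : ∃ t : Ioc c T, V t < L + r :=
    iInf_lt_iff.mp (ENNReal.lt_add_right hL hr.ne')
  filter_upwards [Ioo_mem_nhdsGT (lt_min ht₀.1 (lt_add_of_pos_right c hε))] with b hb a ha
  have hb₀ : b ≤ t₀ := hb.2.le.trans (min_le_left _ _)
  have hbε : b < c + ε := hb.2.trans_le (min_le_right _ _)
  have hSa : S < a := hc.1.trans_lt ha.1
  refine (ENNReal.add_lt_add_iff_left (hVT a ⟨ha.1, ha.2.le.trans (hb₀.trans ht₀.2)⟩)).mp ?_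
  calc V a + variStep F xbar A δ a b ≤ V b := etaE_add_variStep_le hSa ha.2 (by linarith [ha.1])
    _ ≤ V t₀ := hmono (hSa.trans ha.2) (hSa.trans (ha.2.trans_le hb₀)) hb₀
    _ < L + r := hV₀
    _ ≤ V a + r := by
      gcongr
      exact iInf_le (fun t : Ioc c T => V t) ⟨a, ha.1, ha.2.le.trans (hb₀.trans ht₀.2)⟩

theorem eventually_variStep_lt_nhdsLT {S T δ ε c : ℝ} {r : ℝ≥0∞} (hε : 0 < ε)
    (hT : etaE F xbar A S δ ε T ≠ ⊤) (hc : c ∈ Ioc S T) (hr : 0 < r) :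
    ∀ᶠ a in 𝓝[<] c, ∀ b ∈ Ioo a c, variStep F xbar A δ a b < r := by
  set V := etaE F xbar A S δ ε
  have hmono : MonotoneOn V (Ioi S) := etaE_monotoneOn hε
  have hVc : V c ≤ V T := hmono hc.1 (hc.1.trans_le hc.2) hc.2
  have : Nonempty (Ioo S c) := (nonempty_Ioo.mpr hc.1).to_subtype
  -- the left limit of the monotone `V` at `c`
  set L := ⨆ t : Ioo S c, V t
  have hL : L ≤ V c := iSup_le fun t => hmono t.2.1 hc.1 t.2.2.le
  obtain ⟨⟨t₀, ht₀⟩, hV₀⟩ : ∃ t : Ioo S c, L < V t + r := by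
    rw [← lt_iSup_iff, ← ENNReal.iSup_add]
    exact ENNReal.lt_add_right (ne_top_of_le_ne_top hT (hL.trans hVc)) hr.ne'
  filter_upwards [Ioo_mem_nhdsLT (max_lt ht₀.2 (sub_lt_self c hε))] with a ha b hb
  have hSa : S < a := ht₀.1.trans_le ((le_max_left _ _).trans ha.1.le)
  have hVa : V a ≠ ⊤ :=
    ne_top_of_le_ne_top hT (hmono hSa (hc.1.trans_le hc.2) (ha.2.le.trans hc.2))
  refine (ENNReal.add_lt_add_iff_left hVa).mp ?_
  calc V a + variStep F xbar A δ a b ≤ V b :=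
        etaE_add_variStep_le hSa hb.1 (by linarith [le_max_right t₀ (c - ε), ha.1, hb.2])
    _ ≤ L := le_iSup_of_le ⟨b, hSa.trans hb.1, hb.2⟩ le_rfl
    _ < V t₀ + r := hV₀
    _ ≤ V a + r := by
      gcongr
      exact hmono ht₀.1 hSa ((le_max_left _ _).trans ha.1.le)

theorem closedBall_subset_tube {a b t c δ δ' : ℝ} (ht : t ∈ Icc a b)
    (hxt : dist (xbar t) (xbar c) ≤ δ' - δ) : closedBall (xbar c) δ ⊆ tube xbar a b δ' :=
  fun y hy => ⟨t, ht, by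
    linarith [dist_triangle y (xbar c) (xbar t), mem_closedBall.mp hy,
      dist_comm (xbar t) (xbar c)]⟩

theorem eventually_eventually_hausdorffEDist_le_nhdsGT {S T δ δ' ε c : ℝ} {r : ℝ≥0∞}
    (hx : ContinuousOn xbar (Icc S T)) (hδ : δ < δ') (hε : 0 < ε)
    (hT : etaE F xbar A S δ' ε T ≠ ⊤) (hc : c ∈ Ico S T) (hr : 0 < r) :
    ∀ᶠ t in 𝓝[>] c, ∀ᶠ t' in 𝓝[>] c, ∀ p ∈ closedBall (xbar c) δ ×ˢ A,
      hausdorffEDist (F t' p.1 p.2) (F t p.1 p.2) ≤ r := by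
  have hxc : ∀ᶠ t in 𝓝[>] c, dist (xbar t) (xbar c) < δ' - δ :=
    Metric.tendsto_nhds.mp ((hx c (Ico_subset_Icc_self hc)).mono_of_mem_nhdsWithin
      (Icc_mem_nhdsGT_of_mem hc)) _ (sub_pos.mpr hδ)
  filter_upwards [self_mem_nhdsWithin, eventually_variStep_lt_nhdsGT hε hT hc hr, hxc]
    with b hb hvar hxb
  filter_upwards [Ioo_mem_nhdsGT hb] with a ha
  rintro ⟨x, α⟩ ⟨hxB, hα⟩
  rw [hausdorffEDist_comm]
  exact (hausdorffEDist_le_variStep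
    (closedBall_subset_tube ⟨ha.2.le, le_rfl⟩ hxb.le hxB) hα).trans (hvar a ha).le

theorem eventually_eventually_hausdorffEDist_le_nhdsLT {S T δ δ' ε c : ℝ} {r : ℝ≥0∞}
    (hx : ContinuousOn xbar (Icc S T)) (hδ : δ < δ') (hε : 0 < ε)
    (hT : etaE F xbar A S δ' ε T ≠ ⊤) (hc : c ∈ Ioc S T) (hr : 0 < r) :
    ∀ᶠ t in 𝓝[<] c, ∀ᶠ t' in 𝓝[<] c, ∀ p ∈ closedBall (xbar c) δ ×ˢ A,
      hausdorffEDist (F t' p.1 p.2) (F t p.1 p.2) ≤ r := by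
  have hxc : ∀ᶠ t in 𝓝[<] c, dist (xbar t) (xbar c) < δ' - δ :=
    Metric.tendsto_nhds.mp ((hx c (Ioc_subset_Icc_self hc)).mono_of_mem_nhdsWithin
      (Icc_mem_nhdsLT_of_mem hc)) _ (sub_pos.mpr hδ)
  filter_upwards [self_mem_nhdsWithin, eventually_variStep_lt_nhdsLT hε hT hc hr, hxc]
    with a ha hvar hxa
  filter_upwards [Ioo_mem_nhdsLT ha] with b hb
  rintro ⟨x, α⟩ ⟨hxB, hα⟩
  exact (hausdorffEDist_le_variStep
    (closedBall_subset_tube ⟨le_rfl, hb.1.le⟩ hxa.le hxB) hα).trans (hvar b hb).le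

end Variation

theorem tendsto_iSup_hausdorffEDist_of_cauchy {τ ι E : Type*} [PseudoEMetricSpace E]
    {l : Filter τ} [l.NeBot] {f : τ → ι → Set E} {g : ι → Set E} {s : Set ι}
    (hlim : ∀ i ∈ s, Tendsto (fun t => hausdorffEDist (f t i) (g i)) l (𝓝 0))
    (hcauchy : ∀ r : ℝ≥0∞, 0 < r →
      ∀ᶠ t in l, ∀ᶠ t' in l, ∀ i ∈ s, hausdorffEDist (f t' i) (f t i) ≤ r) :
    Tendsto (fun t => ⨆ i ∈ s, hausdorffEDist (g i) (f t i)) l (𝓝 0) := by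
  refine ENNReal.tendsto_nhds_zero.mpr fun r hr => ?_
  have hr₂ : 0 < r / 2 := ENNReal.half_pos hr.ne'
  filter_upwards [hcauchy _ hr₂] with t ht
  refine iSup₂_le fun i hi => ?_
  obtain ⟨t', ht', hlim'⟩ := (ht.and (ENNReal.tendsto_nhds_zero.mp (hlim i hi) _ hr₂)).exists
  calc hausdorffEDist (g i) (f t i)
      ≤ hausdorffEDist (g i) (f t' i) + hausdorffEDist (f t' i) (f t i) := hausdorffEDist_triangle
    _ ≤ r / 2 + r / 2 := add_le_add (hausdorffEDist_comm.trans_le hlim') (ht' i hi)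
    _ = r := ENNReal.add_halves r

theorem stmt4_general {n k : ℕ} (S T : ℝ)
    (A : Set (Eucl k))
    (F : ℝ → Eucl n → Eucl k → Set (Eucl n))
    (xbar : ℝ → Eucl n) (hx : ContinuousOn xbar (Icc S T))
    (δbar : ℝ) (hfin : etaD F xbar A S δbar T < ⊤)
    (δ : ℝ) (hδδ : δ < δbar) :
    (∀ sbar ∈ Ico S T, ∀ Fp : Eucl n → Eucl k → Set (Eucl n),
      (∀ x ∈ closedBall (xbar sbar) δ, ∀ a ∈ A,
        Tendsto (fun s => EMetric.hausdorffEdist (F s x a) (Fp x a))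
          (𝓝[Ioc sbar T] sbar) (𝓝 0)) →
      Tendsto (fun s => ⨆ x ∈ closedBall (xbar sbar) δ, ⨆ a ∈ A,
          EMetric.hausdorffEdist (Fp x a) (F s x a))
        (𝓝[Ioc sbar T] sbar) (𝓝 0)) ∧
    (∀ tbar ∈ Ioc S T, ∀ Fm : Eucl n → Eucl k → Set (Eucl n),
      (∀ x ∈ closedBall (xbar tbar) δ, ∀ a ∈ A,
        Tendsto (fun t => EMetric.hausdorffEdist (F t x a) (Fm x a))
          (𝓝[Ico S tbar] tbar) (𝓝 0)) →
      Tendsto (fun t => ⨆ x ∈ closedBall (xbar tbar) δ, ⨆ a ∈ A,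
          EMetric.hausdorffEdist (Fm x a) (F t x a))
        (𝓝[Ico S tbar] tbar) (𝓝 0)) := by
  simp only [etaD, iInf_lt_iff] at hfin
  obtain ⟨ε, hε, hT⟩ := hfin
  refine ⟨fun sbar hsbar Fp hFp => ?_, fun tbar htbar Fm hFm => ?_⟩
  · rw [nhdsWithin_Ioc_eq_nhdsGT hsbar.2] at hFp ⊢
    have h := tendsto_iSup_hausdorffEDist_of_cauchy (fun p hp => hFp p.1 hp.1 p.2 hp.2)
      (fun r hr => eventually_eventually_hausdorffEDist_le_nhdsGT hx hδδ hε hT.ne hsbar hr)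
    simp only [biSup_prod] at h
    exact h
  · rw [nhdsWithin_Ico_eq_nhdsLT htbar.1] at hFm ⊢
    have h := tendsto_iSup_hausdorffEDist_of_cauchy (fun p hp => hFm p.1 hp.1 p.2 hp.2)
      (fun r hr => eventually_eventually_hausdorffEDist_le_nhdsLT hx hδδ hε hT.ne htbar hr)
    simp only [biSup_prod] at h
    exact h

/-- Under (C1), (C2) and bounded variation of `F` along `x̄` uniformly
over `A`, the convergence to the one-sided limits is uniform over
`x ∈ x̄(s̄) + δB` (resp. `x ∈ x̄(t̄) + δB`) and `a ∈ A`. -/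
theorem stmt4 {n k : ℕ} (S T : ℝ) (hST : S < T)
    (A : Set (Eucl k)) (hA : IsCompact A)
    (F : ℝ → Eucl n → Eucl k → Set (Eucl n))
    (xbar : ℝ → Eucl n) (hx : ContinuousOn xbar (Icc S T))
    (hBV : eta F xbar A S T < ⊤)
    (δbar : ℝ) (hδbar : 0 < δbar) (hfin : etaD F xbar A S δbar T < ⊤)
    (hC1 : HypC1 F xbar A S T δbar)
    (γ : ℝ → ℝ) (hC2 : HypC2 F xbar A S T δbar γ)
    (δ : ℝ) (hδ : 0 < δ) (hδδ : δ < δbar) :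
    (∀ sbar ∈ Ico S T, ∀ Fp : Eucl n → Eucl k → Set (Eucl n),
      (∀ x ∈ closedBall (xbar sbar) δ, ∀ a ∈ A,
        Tendsto (fun s => EMetric.hausdorffEdist (F s x a) (Fp x a))
          (𝓝[Ioc sbar T] sbar) (𝓝 0)) →
      Tendsto (fun s => ⨆ x ∈ closedBall (xbar sbar) δ, ⨆ a ∈ A,
          EMetric.hausdorffEdist (Fp x a) (F s x a))
        (𝓝[Ioc sbar T] sbar) (𝓝 0)) ∧
    (∀ tbar ∈ Ioc S T, ∀ Fm : Eucl n → Eucl k → Set (Eucl n),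
      (∀ x ∈ closedBall (xbar tbar) δ, ∀ a ∈ A,
        Tendsto (fun t => EMetric.hausdorffEdist (F t x a) (Fm x a))
          (𝓝[Ico S tbar] tbar) (𝓝 0)) →
      Tendsto (fun t => ⨆ x ∈ closedBall (xbar tbar) δ, ⨆ a ∈ A,
          EMetric.hausdorffEdist (Fm x a) (F t x a))
        (𝓝[Ico S tbar] tbar) (𝓝 0)) :=
  stmt4_general S T A F xbar hx δbar hfin δ hδδ
end
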